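/- arXiv:0802.3118 — 2 statements merged into one kernel-verified Lean document; each statement's English description precedes it below -/
import Mathlib

section
/- Let n ≥ 1, let U ⊆ ℂⁿ be open and K ⊆ U compact. Then there exists a real constant C > 0, depending only on K and U, such that for every holomorphic function f : U → ℂ and every a ∈ K one has |f(a)|² ≤ C · ∫_U |f(z)|² dz, where the integral is with respect to Lebesgue measure on ℂⁿ ≅ ℝ^{2n} (the inequality being trivial when the integral is infinite). -/
/-!
Sub-mean-value argument. By the mean value property, `‖g c‖` is at most the average of `‖g‖` over
any circle about `c` inside the domain of a holomorphic `g`; integrating over the radii in polar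
coordinates bounds `π r² ‖g c‖` by `∫_{B(c,r)} ‖g‖`, and Fubini iterates this over the factors of a
polydisc, which is a ball for the sup norm on `ℂⁿ`. Applied to `g = f²` it gives
`(π δ²)ⁿ |f(a)|² ≤ ∫_U |f|²` whenever the polydisc of radius `δ` about `a` lies in `U`, and a
compact `K ⊆ U` has some `δ > 0` that works for all its points.
-/

open MeasureTheory Metric Real Set
open scoped ENNReal

variable {E : Type*} [NormedAddCommGroup E] [NormedSpace ℂ E] [CompleteSpace E]

theorem DiffContOnCl.ofReal_two_pi_mul_enorm_le_lintegral_circleMap {g : ℂ → E} {c : ℂ}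
    {ρ : ℝ} (hg : DiffContOnCl ℂ g (ball c |ρ|)) :
    ENNReal.ofReal (2 * π) * ‖g c‖ₑ ≤ ∫⁻ θ in Ioo (-π) π, ‖g (circleMap c ρ θ)‖ₑ := by
  have hmean : (2 * π) • g c = ∫ θ in Ioc (-π) π, g (circleMap c ρ θ) := by
    rw [← hg.circleAverage, circleAverage_eq_integral_add (-π), smul_inv_smul₀ two_pi_pos.ne',
      intervalIntegral.integral_comp_add_right (fun θ ↦ g (circleMap c ρ θ)),
      intervalIntegral.integral_of_le (by linarith [pi_pos])]
    ring_nf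
  calc ENNReal.ofReal (2 * π) * ‖g c‖ₑ = ‖∫ θ in Ioc (-π) π, g (circleMap c ρ θ)‖ₑ := by
        rw [← hmean, enorm_smul, Real.enorm_of_nonneg two_pi_pos.le]
    _ ≤ ∫⁻ θ in Ioc (-π) π, ‖g (circleMap c ρ θ)‖ₑ := enorm_integral_le_lintegral_enorm _
    _ = ∫⁻ θ in Ioo (-π) π, ‖g (circleMap c ρ θ)‖ₑ := setLIntegral_congr Ioo_ae_eq_Ioc.symm

theorem Complex.add_polarCoord_symm_eq_circleMap (c : ℂ) (p : ℝ × ℝ) :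
    c + Complex.polarCoord.symm p = circleMap c p.1 p.2 := by
  simp [circleMap, Complex.exp_mul_I, mul_add, ← Complex.ofReal_cos, ← Complex.ofReal_sin]

theorem setLIntegral_Ioo_zero_ofReal {r : ℝ} (hr : 0 ≤ r) :
    ∫⁻ ρ in Ioo 0 r, ENNReal.ofReal ρ = ENNReal.ofReal (r ^ 2 / 2) := by
  have hint : IntegrableOn (fun ρ : ℝ ↦ ρ) (Ioo 0 r) :=
    continuous_id.integrableOn_Icc.mono_set Ioo_subset_Icc_self
  rw [← ofReal_integral_eq_lintegral_ofReal hint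
      (ae_restrict_of_forall_mem measurableSet_Ioo fun x hx ↦ hx.1.le),
    ← integral_Ioc_eq_integral_Ioo, ← intervalIntegral.integral_of_le hr]
  simp

theorem DifferentiableOn.enorm_mul_le_setLIntegral_ball {g : ℂ → E} {c : ℂ} {r : ℝ}
    (hr : 0 ≤ r) (hg : DifferentiableOn ℂ g (ball c r)) :
    ‖g c‖ₑ * ENNReal.ofReal (π * r ^ 2) ≤ ∫⁻ z in ball c r, ‖g z‖ₑ := by
  set s : Set (ℝ × ℝ) := Ioo 0 r ×ˢ Ioo (-π) π
  have hs : s ⊆ polarCoord.target := prod_mono_left Ioo_subset_Ioi_self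
  have hball : ∀ p ∈ s, circleMap c p.1 p.2 ∈ ball c r := fun p hp ↦ by
    rw [mem_ball, dist_eq_norm, circleMap_sub_center, norm_circleMap_zero, abs_of_pos hp.1.1]
    exact hp.1.2
  have hmeas : AEMeasurable (fun p : ℝ × ℝ ↦ ENNReal.ofReal p.1 * ‖g (circleMap c p.1 p.2)‖ₑ)
      ((volume.prod volume).restrict s) :=
    (ENNReal.measurable_ofReal.comp measurable_fst).aemeasurable.mul <|
      (continuous_enorm.comp_continuousOn (hg.continuousOn.comp (by fun_prop) hball)).aemeasurable
        (measurableSet_Ioo.prod measurableSet_Ioo)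
  calc ‖g c‖ₑ * ENNReal.ofReal (π * r ^ 2)
      = ∫⁻ ρ in Ioo 0 r, ENNReal.ofReal ρ * (ENNReal.ofReal (2 * π) * ‖g c‖ₑ) := by
        rw [lintegral_mul_const' _ _ (by finiteness), setLIntegral_Ioo_zero_ofReal hr,
          ← mul_assoc, ← ENNReal.ofReal_mul (by positivity)]
        ring_nf
    _ ≤ ∫⁻ ρ in Ioo 0 r, ∫⁻ θ in Ioo (-π) π, ENNReal.ofReal ρ * ‖g (circleMap c ρ θ)‖ₑ := by
        refine setLIntegral_mono' measurableSet_Ioo fun ρ hρ ↦ ?_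
        rw [lintegral_const_mul' _ _ ENNReal.ofReal_ne_top]
        gcongr
        refine DiffContOnCl.ofReal_two_pi_mul_enorm_le_lintegral_circleMap ?_
        rw [abs_of_pos hρ.1]
        exact hg.diffContOnCl_ball (closedBall_subset_ball hρ.2)
    _ = ∫⁻ p in s, ENNReal.ofReal p.1 * ‖g (circleMap c p.1 p.2)‖ₑ := by
        rw [Measure.volume_eq_prod, setLIntegral_prod _ hmeas]
    _ = ∫⁻ p in s, ENNReal.ofReal p.1 *
          (ball c r).indicator (‖g ·‖ₑ) (c + Complex.polarCoord.symm p) := by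
        refine setLIntegral_congr_fun (measurableSet_Ioo.prod measurableSet_Ioo) fun p hp ↦ ?_
        rw [Complex.add_polarCoord_symm_eq_circleMap, indicator_of_mem (hball p hp)]
    _ ≤ ∫⁻ p in polarCoord.target, ENNReal.ofReal p.1 *
          (ball c r).indicator (‖g ·‖ₑ) (c + Complex.polarCoord.symm p) :=
        lintegral_mono_set hs
    _ = ∫⁻ z, (ball c r).indicator (‖g ·‖ₑ) z := by
        rw [← lintegral_add_left_eq_self _ c, ← Complex.lintegral_comp_polarCoord_symm]
        rfl
    _ = ∫⁻ z in ball c r, ‖g z‖ₑ := lintegral_indicator measurableSet_ball _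

theorem Fin.cons_mem_ball_iff {n : ℕ} {α : Type*} [PseudoMetricSpace α] {a : Fin (n + 1) → α}
    {r : ℝ} (hr : 0 < r) {x : α} {y : Fin n → α} :
    (Fin.cons x y : Fin (n + 1) → α) ∈ ball a r ↔ x ∈ ball (a 0) r ∧ y ∈ ball (Fin.tail a) r := by
  simp [ball_pi _ hr, Fin.forall_fin_succ, Fin.tail]

theorem DifferentiableOn.enorm_mul_le_setLIntegral_ball_pi {n : ℕ} {g : (Fin n → ℂ) → E}
    {a : Fin n → ℂ} {r : ℝ} (hr : 0 < r) (hg : DifferentiableOn ℂ g (ball a r)) :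
    ‖g a‖ₑ * ENNReal.ofReal (π * r ^ 2) ^ n ≤ ∫⁻ z in ball a r, ‖g z‖ₑ := by
  induction n with
  | zero =>
    classical
    rw [pow_zero, mul_one, volume_pi, Measure.pi_of_empty (x := a), setLIntegral_dirac,
      if_pos (mem_ball_self hr)]
  | succ n ih =>
    set c := ENNReal.ofReal (π * r ^ 2)
    let cons : ℂ × (Fin n → ℂ) → (Fin (n + 1) → ℂ) := fun w ↦ Fin.cons w.1 w.2
    have hcons : Differentiable ℂ cons := differentiable_fst.finCons differentiable_snd
    have hmaps : MapsTo cons (ball (a 0) r ×ˢ ball (Fin.tail a) r) (ball a r) :=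
      fun w hw ↦ (Fin.cons_mem_ball_iff hr).2 hw
    have hcons_eq : ⇑(MeasurableEquiv.piFinSuccAbove (fun _ : Fin (n + 1) ↦ ℂ) 0).symm = cons := by
      ext w : 1
      simp [cons, Fin.consEquiv]
    have hpres : MeasurePreserving cons (volume.prod volume) volume :=
      hcons_eq ▸ (volume_preserving_piFinSuccAbove (fun _ : Fin (n + 1) ↦ ℂ) 0).symm
    have hmeas : AEMeasurable (fun w ↦ ‖g (cons w)‖ₑ)
        ((volume.prod volume).restrict (ball (a 0) r ×ˢ ball (Fin.tail a) r)) :=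
      (continuous_enorm.comp_continuousOn (hg.continuousOn.comp hcons.continuous.continuousOn
        hmaps)).aemeasurable (measurableSet_ball.prod measurableSet_ball)
    have hslice₁ : DifferentiableOn ℂ (fun x ↦ g (Fin.cons x (Fin.tail a))) (ball (a 0) r) :=
      hg.comp (hcons.comp (differentiable_id.prodMk (differentiable_const _))).differentiableOn
        fun x hx ↦ (Fin.cons_mem_ball_iff hr).2 ⟨hx, mem_ball_self hr⟩
    have hslice₂ : ∀ x ∈ ball (a 0) r,
        DifferentiableOn ℂ (fun y ↦ g (Fin.cons x y)) (ball (Fin.tail a) r) := fun x hx ↦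
      hg.comp (hcons.comp ((differentiable_const _).prodMk differentiable_id)).differentiableOn
        fun y hy ↦ (Fin.cons_mem_ball_iff hr).2 ⟨hx, hy⟩
    calc ‖g a‖ₑ * c ^ (n + 1) = ‖g (Fin.cons (a 0) (Fin.tail a))‖ₑ * c * c ^ n := by
          rw [Fin.cons_self_tail, pow_succ]
          ring
      _ ≤ (∫⁻ x in ball (a 0) r, ‖g (Fin.cons x (Fin.tail a))‖ₑ) * c ^ n := by
          gcongr
          exact hslice₁.enorm_mul_le_setLIntegral_ball hr.le
      _ ≤ ∫⁻ x in ball (a 0) r, ∫⁻ y in ball (Fin.tail a) r, ‖g (Fin.cons x y)‖ₑ := by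
          rw [← lintegral_mul_const' _ _ (by finiteness)]
          exact setLIntegral_mono' measurableSet_ball fun x hx ↦ ih (hslice₂ x hx)
      _ = ∫⁻ w in ball (a 0) r ×ˢ ball (Fin.tail a) r, ‖g (cons w)‖ₑ ∂(volume.prod volume) :=
          (setLIntegral_prod _ hmeas).symm
      _ ≤ ∫⁻ w in cons ⁻¹' ball a r, ‖g (cons w)‖ₑ ∂(volume.prod volume) :=
          lintegral_mono_set fun w hw ↦ hmaps hw
      _ = ∫⁻ z in ball a r, ‖g z‖ₑ :=
          hpres.setLIntegral_comp_preimage_emb (hcons_eq ▸ MeasurableEquiv.measurableEmbedding _)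
            (fun z ↦ ‖g z‖ₑ) (ball a r)

theorem sq_norm_le_const_mul_integral_sq_norm_general
    (n : ℕ) (U : Set (Fin n → ℂ)) (hU : IsOpen U)
    (K : Set (Fin n → ℂ)) (hK : IsCompact K) (hKU : K ⊆ U) :
    ∃ C : ℝ, 0 < C ∧ ∀ f : (Fin n → ℂ) → ℂ, DifferentiableOn ℂ f U →
      ∀ a ∈ K, ENNReal.ofReal (‖f a‖ ^ 2) ≤
        ENNReal.ofReal C * ∫⁻ z in U, ENNReal.ofReal (‖f z‖ ^ 2) ∂volume := by
  obtain ⟨δ, hδ, hδU⟩ := hK.exists_cthickening_subset_open hU hKU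
  refine ⟨((π * δ ^ 2) ^ n)⁻¹, by positivity, fun f hf a ha ↦ ?_⟩
  have hball : ball a δ ⊆ U :=
    ball_subset_closedBall.trans ((closedBall_subset_cthickening ha δ).trans hδU)
  have hmean := ((hf.mono hball).pow 2).enorm_mul_le_setLIntegral_ball_pi hδ
  have hsq : ∀ z, ENNReal.ofReal (‖f z‖ ^ 2) = ‖f z ^ 2‖ₑ := fun z ↦ by
    rw [enorm_pow, ← ofReal_norm, ENNReal.ofReal_pow (norm_nonneg _)]
  simp_rw [hsq]
  rw [ENNReal.ofReal_inv_of_pos (by positivity), ENNReal.ofReal_pow (by positivity),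
    ← ENNReal.div_eq_inv_mul, ENNReal.le_div_iff_mul_le (Or.inl (by positivity))
      (Or.inl (by finiteness))]
  exact hmean.trans (lintegral_mono_set hball)

/-- **Mean-value estimate for holomorphic functions.** Let `U ⊆ ℂⁿ` be open
and `K ⊆ U` compact. Then there is a constant `C > 0`, depending only on `K`
and `U`, such that for every holomorphic function `f : U → ℂ` and every
`a ∈ K`, `|f(a)|² ≤ C ∫_U |f(z)|² dz` (with respect to Lebesgue measure on
`ℂⁿ`; the inequality is trivial when the integral is infinite). -/
theorem sq_norm_le_const_mul_integral_sq_norm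
    (n : ℕ) (hn : 1 ≤ n) (U : Set (Fin n → ℂ)) (hU : IsOpen U)
    (K : Set (Fin n → ℂ)) (hK : IsCompact K) (hKU : K ⊆ U) :
    ∃ C : ℝ, 0 < C ∧ ∀ f : (Fin n → ℂ) → ℂ, DifferentiableOn ℂ f U →
      ∀ a ∈ K, ENNReal.ofReal (‖f a‖ ^ 2) ≤
        ENNReal.ofReal C * ∫⁻ z in U, ENNReal.ofReal (‖f z‖ ^ 2) ∂volume :=
  sq_norm_le_const_mul_integral_sq_norm_general n U hU K hK hKU
end

section
/- Let M ⊆ ℂⁿ be open and let Γ be a group of biholomorphic maps A : M → M each of which preserves Lebesgue measure on M. Let a ∈ M be a point whose stabilizer Γ_a := {A ∈ Γ : A(a) = a} is finite, and suppose there is an open neighborhood U ⊆ M of a such that for all A ∈ Γ: if A(U) ∩ U ≠ ∅ then A ∈ Γ_a, and if A ∈ Γ_a then A(U) = U. Then for every holomorphic function f : M → ℂ with ∫_M |f(z)|² dz < ∞, the family (|f(A(a))|²)_{A ∈ Γ} is summable; in particular the Poincaré series Σ_{A ∈ Γ} |f(A(a))|² converges. -/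
/-!
The key estimate is the sub-mean value property of `|F|²` for holomorphic `F` on a polydisc `P`
centred at `a`: `|F a|² vol P ≤ ∫_P |F|²`. For a disc this comes from the mean value property of
the holomorphic function `F²` on circles, integrated in polar coordinates; for a polydisc it
follows by Fubini, one coordinate at a time.

Choose `P` with closure in `U`. Applied to `f ∘ A` and transported by the measure-preserving
map `A`, the estimate gives `|f (A a)|² vol P ≤ ∫_{A P} |f|²`. If `A P` and `B P` meet, then
`B⁻¹ A` moves a point of `U` into `U`, so `B⁻¹ A ∈ Γ_a`; hence every point of `M` lies in at
most `|Γ_a|` of the translates `A P`. Summing over any finite set of `A` bounds the partial sums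
of the Poincaré series by `|Γ_a| ∫_M |f|² / vol P`.
-/

open MeasureTheory Metric Set Real
open scoped ENNReal Finset

theorem ContinuousOn.measurable_indicator {α γ : Type*} [TopologicalSpace α] [MeasurableSpace α]
    [OpensMeasurableSpace α] [TopologicalSpace γ] [MeasurableSpace γ] [BorelSpace γ] [Zero γ]
    {g : α → γ} {s : Set α} (hg : ContinuousOn g s) (hs : MeasurableSet s) :
    Measurable (s.indicator g) := by
  classical
  rw [← piecewise_eq_indicator]
  exact hg.measurable_piecewise continuousOn_const hs

theorem ContinuousOn.measurableSet_inter_preimage {α β : Type*} [TopologicalSpace α]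
    [MeasurableSpace α] [OpensMeasurableSpace α] [TopologicalSpace β] [MeasurableSpace β]
    [BorelSpace β] {T : α → β} {s : Set α} {t : Set β} (hT : ContinuousOn T s)
    (hs : MeasurableSet s) (ht : MeasurableSet t) : MeasurableSet (s ∩ T ⁻¹' t) := by
  rw [← Subtype.image_preimage_coe]
  exact hs.subtype_image (hT.domRestrict.measurable ht)

theorem ContinuousOn.ennreal_ofReal_sq_norm {α E : Type*} [TopologicalSpace α]
    [SeminormedAddGroup E] {F : α → E} {s : Set α} (hF : ContinuousOn F s) :
    ContinuousOn (fun z => ENNReal.ofReal (‖F z‖ ^ 2)) s :=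
  ENNReal.continuous_ofReal.comp_continuousOn (hF.norm.pow 2)

theorem setLIntegral_comp_eq_setLIntegral_image {α β : Type*} [TopologicalSpace α]
    [MeasurableSpace α] [OpensMeasurableSpace α] [TopologicalSpace β] [MeasurableSpace β]
    [BorelSpace β] {μ : Measure α} {ν : Measure β} {T : α → β} {s : Set α}
    (hs : MeasurableSet s) (hT : ContinuousOn T s)
    (hTν : ∀ u ⊆ s, MeasurableSet u → ν (T '' u) = μ u) {φ : β → ℝ≥0∞}
    (hφ : AEMeasurable φ (ν.restrict (T '' s))) :
    ∫⁻ x in s, φ (T x) ∂μ = ∫⁻ y in T '' s, φ y ∂ν := by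
  have hmap : (μ.restrict s).map T = ν.restrict (T '' s) := by
    ext u hu
    rw [Measure.map_apply_of_aemeasurable (hT.aemeasurable hs) hu, Measure.restrict_apply' hs,
      Measure.restrict_apply hu, inter_comm u, ← image_inter_preimage,
      hTν _ inter_subset_left (hT.measurableSet_inter_preimage hs hu), inter_comm]
  rw [← hmap] at hφ
  rw [← hmap, lintegral_map' hφ (hT.aemeasurable hs)]

open scoped Classical in
theorem sum_setLIntegral_le_mul_setLIntegral {α ι : Type*} [MeasurableSpace α]
    {μ : Measure α} {M : Set α} {f : α → ℝ≥0∞} (hf : AEMeasurable f (μ.restrict M))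
    {s : ι → Set α} (hs : ∀ i, MeasurableSet (s i)) (hsM : ∀ i, s i ⊆ M) {t : Finset ι}
    {N : ℕ} (hN : ∀ x, #{i ∈ t | x ∈ s i} ≤ N) :
    ∑ i ∈ t, ∫⁻ x in s i, f x ∂μ ≤ N * ∫⁻ x in M, f x ∂μ := by
  have hcount (x : α) : ∑ i ∈ t, (s i).indicator f x = #{i ∈ t | x ∈ s i} * f x := by
    rw [← nsmul_eq_mul, ← Finset.sum_const, Finset.sum_filter]
    exact Finset.sum_congr rfl fun i _ => by by_cases hx : x ∈ s i <;> simp [hx]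
  calc ∑ i ∈ t, ∫⁻ x in s i, f x ∂μ = ∫⁻ x in M, ∑ i ∈ t, (s i).indicator f x ∂μ := by
        rw [lintegral_finsetSum' _ fun i _ => hf.indicator (hs i)]
        refine Finset.sum_congr rfl fun i _ => ?_
        rw [setLIntegral_indicator (hs i), inter_eq_left.2 (hsM i)]
    _ ≤ ∫⁻ x in M, N * f x ∂μ :=
        lintegral_mono fun x => (hcount x).trans_le (mul_le_mul_left (by exact_mod_cast hN x) _)
    _ = N * ∫⁻ x in M, f x ∂μ := lintegral_const_mul' _ _ (ENNReal.natCast_ne_top N)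

theorem summable_of_sum_ofReal_mul_le {ι : Type*} {u : ι → ℝ} (hu : ∀ i, 0 ≤ u i)
    {v C : ℝ≥0∞} (hv : v ≠ 0) (hC : C ≠ ⊤)
    (h : ∀ t : Finset ι, (∑ i ∈ t, ENNReal.ofReal (u i)) * v ≤ C) : Summable u := by
  have htsum : ∑' i, ENNReal.ofReal (u i) ≤ C / v :=
    ENNReal.summable.tsum_le_of_sum_le fun t =>
      (ENNReal.le_div_iff_mul_le (Or.inl hv) (Or.inr hC)).2 (h t)
  simpa [ENNReal.toReal_ofReal (hu _)] using
    ENNReal.summable_toReal (ne_top_of_le_ne_top (ENNReal.div_ne_top hC hv) htsum)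

open scoped Classical in
theorem card_filter_mem_le_ncard {G α : Type*} [Group G] {S : G → Set α} {H : Set G}
    (hH : H.Finite) (hS : ∀ g h, (S g ∩ S h).Nonempty → h⁻¹ * g ∈ H) (t : Finset G) (x : α) :
    #{g ∈ t | x ∈ S g} ≤ H.ncard := by
  obtain hempty | ⟨h, hh⟩ := Finset.eq_empty_or_nonempty {g ∈ t | x ∈ S g}
  · simp [hempty]
  · rw [Set.ncard_eq_toFinset_card H hH]
    refine Finset.card_le_card_of_injOn (h⁻¹ * ·) (fun g hg => ?_)
      fun g₁ _ g₂ _ => mul_left_cancel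
    simp only [Finset.coe_filter, Finset.mem_filter] at hg hh
    simpa using hS g h ⟨x, hg.2, hh.2⟩

theorem Fin.cons_mem_univ_pi {α : Type*} {n : ℕ} {s : Fin (n + 1) → Set α} {x : α}
    {y : Fin n → α} : (Fin.cons x y : Fin (n + 1) → α) ∈ univ.pi s
      ↔ x ∈ s 0 ∧ y ∈ univ.pi fun i => s i.succ := by
  simp [Fin.forall_fin_succ]

theorem setLIntegral_univ_pi_fin_succ {α : Type*} [MeasureSpace α]
    [SigmaFinite (volume : Measure α)] {n : ℕ} (s : Fin (n + 1) → Set α)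
    {f : (Fin (n + 1) → α) → ℝ≥0∞} (hf : Measurable f) :
    ∫⁻ z in univ.pi s, f z
      = ∫⁻ x in s 0, ∫⁻ y in univ.pi fun i => s i.succ, f (Fin.cons x y) := by
  set e := MeasurableEquiv.piFinSuccAbove (fun _ : Fin (n + 1) => α) 0
  have hpre : e.symm ⁻¹' univ.pi s = s 0 ×ˢ univ.pi fun i => s i.succ := by
    ext ⟨x, y⟩
    simpa [e, Fin.insertNth_zero'] using Fin.cons_mem_univ_pi
  rw [← (volume_preserving_piFinSuccAbove (fun _ : Fin (n + 1) => α) 0).symm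
      |>.setLIntegral_comp_preimage_emb e.symm.measurableEmbedding, hpre,
    Measure.volume_eq_prod,
    setLIntegral_prod (fun p => f (e.symm p)) (hf.comp e.symm.measurable).aemeasurable]
  simp only [e, MeasurableEquiv.piFinSuccAbove_symm_apply, Fin.insertNthEquiv_zero]
  rfl

theorem exists_pos_univ_pi_closedBall_subset {ι : Type*} [Fintype ι] {E : ι → Type*}
    [∀ i, PseudoMetricSpace (E i)] {U : Set (∀ i, E i)} {a : ∀ i, E i} (hU : IsOpen U)
    (ha : a ∈ U) : ∃ r > 0, (univ.pi fun i => closedBall (a i) r) ⊆ U := by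
  obtain ⟨ε, hε, hεU⟩ := Metric.isOpen_iff.mp hU a ha
  refine ⟨ε / 2, half_pos hε, ?_⟩
  rw [← closedBall_pi _ (half_pos hε).le]
  exact (closedBall_subset_ball (half_lt_self hε)).trans hεU

theorem sq_norm_le_circleAverage_sq_norm {F : ℂ → ℂ} {c : ℂ} {R : ℝ}
    (hF : DifferentiableOn ℂ F (closedBall c |R|)) :
    ‖F c‖ ^ 2 ≤ circleAverage (fun z => ‖F z‖ ^ 2) c R := by
  have hmean : circleAverage (fun z => F z ^ 2) c R = F c ^ 2 :=
    ((hF.pow 2).mono closure_ball_subset_closedBall).diffContOnCl.circleAverage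
  rw [← norm_pow, ← hmean, circleAverage_def, circleAverage_def, norm_smul, smul_eq_mul,
    Real.norm_of_nonneg (by positivity)]
  gcongr
  refine (intervalIntegral.norm_integral_le_integral_norm two_pi_pos.le).trans_eq ?_
  simp only [norm_pow]

theorem ofReal_sq_norm_mul_volume_le_lintegral_circleMap {F : ℂ → ℂ} {c : ℂ} {R : ℝ}
    (hF : DifferentiableOn ℂ F (closedBall c |R|)) :
    ENNReal.ofReal (‖F c‖ ^ 2) * volume (Ioo (-π) π)
      ≤ ∫⁻ θ in Ioo (-π) π, ENNReal.ofReal (‖F (circleMap c R θ)‖ ^ 2) := by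
  have hcont : Continuous fun θ => ‖F (circleMap c R θ)‖ ^ 2 :=
    ((hF.continuousOn.comp_continuous (continuous_circleMap c R)
      fun θ => sphere_subset_closedBall (circleMap_mem_sphere' c R θ)).norm).pow 2
  have hint : ∫ θ in Ioo (-π) π, ‖F (circleMap c R θ)‖ ^ 2
      = 2 * π * circleAverage (fun z => ‖F z‖ ^ 2) c R := by
    rw [circleAverage_eq_integral_add (-π),
      intervalIntegral.integral_comp_add_right (fun θ => ‖F (circleMap c R θ)‖ ^ 2),
      smul_eq_mul, ← mul_assoc, mul_inv_cancel₀ two_pi_pos.ne', one_mul, zero_add,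
      show 2 * π + -π = π by ring, intervalIntegral.integral_of_le (by linarith [pi_pos]),
      integral_Ioc_eq_integral_Ioo]
  rw [← ofReal_integral_eq_lintegral_ofReal (hcont.integrableOn_Icc.mono_set Ioo_subset_Icc_self)
      (Filter.Eventually.of_forall fun θ => by positivity), hint, Real.volume_Ioo,
    ← ENNReal.ofReal_mul (by positivity)]
  refine ENNReal.ofReal_le_ofReal ?_
  nlinarith [sq_norm_le_circleAverage_sq_norm hF, pi_pos]

theorem circleMap_mem_ball_iff {c : ℂ} {ρ r θ : ℝ} (hρ : 0 < ρ) :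
    circleMap c ρ θ ∈ ball c r ↔ ρ < r := by
  rw [mem_ball, dist_eq_norm, circleMap_sub_center, norm_circleMap_zero, abs_of_pos hρ]

theorem setLIntegral_ball_eq_lintegral_circleMap (c : ℂ) (r : ℝ) {ψ : ℂ → ℝ≥0∞}
    (hψ : Measurable ψ) :
    ∫⁻ z in ball c r, ψ z
      = ∫⁻ ρ in Ioo 0 r, ENNReal.ofReal ρ * ∫⁻ θ in Ioo (-π) π, ψ (circleMap c ρ θ) := by
  set g := (ball c r).indicator ψ
  have hg : Measurable g := hψ.indicator measurableSet_ball
  have hpolar (p : ℝ × ℝ) : c + Complex.polarCoord.symm p = circleMap c p.1 p.2 := by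
    simp [circleMap, Complex.exp_mul_I]
  calc ∫⁻ z in ball c r, ψ z = ∫⁻ z, g z := (lintegral_indicator measurableSet_ball ψ).symm
    _ = ∫⁻ w, g (c + w) := (lintegral_add_left_eq_self g c).symm
    _ = ∫⁻ p in Ioi 0 ×ˢ Ioo (-π) π, ENNReal.ofReal p.1 * g (circleMap c p.1 p.2) := by
      rw [← Complex.lintegral_comp_polarCoord_symm, polarCoord_target]
      simp only [hpolar, smul_eq_mul]
    _ = ∫⁻ ρ in Ioi 0, ∫⁻ θ in Ioo (-π) π, ENNReal.ofReal ρ * g (circleMap c ρ θ) := by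
      rw [Measure.volume_eq_prod, setLIntegral_prod]
      exact (ENNReal.measurable_ofReal.comp measurable_fst).mul
        (hg.comp (by fun_prop)) |>.aemeasurable
    _ = ∫⁻ ρ in Ioi 0, (Ioo 0 r).indicator
          (fun ρ => ENNReal.ofReal ρ * ∫⁻ θ in Ioo (-π) π, ψ (circleMap c ρ θ)) ρ := by
      refine setLIntegral_congr_fun measurableSet_Ioi fun ρ (hρ : 0 < ρ) => ?_
      rw [lintegral_const_mul' _ _ ENNReal.ofReal_ne_top]
      by_cases hρr : ρ < r
      · simp [g, hρr, hρ, circleMap_mem_ball_iff hρ]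
      · simp [g, hρr, circleMap_mem_ball_iff hρ]
    _ = _ := by
      rw [lintegral_indicator measurableSet_Ioo, Measure.restrict_restrict measurableSet_Ioo,
        Ioo_inter_Ioi, max_self]

theorem ofReal_sq_norm_mul_volume_ball_le {F : ℂ → ℂ} {c : ℂ} {r : ℝ}
    (hF : DifferentiableOn ℂ F (closedBall c r)) :
    ENNReal.ofReal (‖F c‖ ^ 2) * volume (ball c r)
      ≤ ∫⁻ z in ball c r, ENNReal.ofReal (‖F z‖ ^ 2) := by
  -- `F` is only controlled on `closedBall c r`: cut it off there to get a measurable integrand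
  set ψ := (closedBall c r).indicator fun z => ENNReal.ofReal (‖F z‖ ^ 2)
  have hψ : Measurable ψ :=
    hF.continuousOn.ennreal_ofReal_sq_norm.measurable_indicator measurableSet_closedBall
  have hcircle : ∀ ρ ∈ Ioo 0 r, ∫⁻ _ in Ioo (-π) π, ENNReal.ofReal (‖F c‖ ^ 2)
      ≤ ∫⁻ θ in Ioo (-π) π, ψ (circleMap c ρ θ) := by
    intro ρ ⟨hρ, hρr⟩
    have hsub : closedBall c |ρ| ⊆ closedBall c r :=
      closedBall_subset_closedBall ((abs_of_pos hρ).trans_le hρr.le)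
    have hon (θ : ℝ) : circleMap c ρ θ ∈ closedBall c r :=
      hsub (sphere_subset_closedBall (circleMap_mem_sphere' c ρ θ))
    rw [setLIntegral_const]
    exact (ofReal_sq_norm_mul_volume_le_lintegral_circleMap (hF.mono hsub)).trans_eq
      (lintegral_congr fun θ => by simp [ψ, hon θ])
  calc ENNReal.ofReal (‖F c‖ ^ 2) * volume (ball c r)
      = ∫⁻ _ in ball c r, ENNReal.ofReal (‖F c‖ ^ 2) := (setLIntegral_const _ _).symm
    _ = ∫⁻ ρ in Ioo 0 r, ENNReal.ofReal ρ * ∫⁻ _ in Ioo (-π) π, ENNReal.ofReal (‖F c‖ ^ 2) :=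
      setLIntegral_ball_eq_lintegral_circleMap c r measurable_const
    _ ≤ ∫⁻ ρ in Ioo 0 r, ENNReal.ofReal ρ * ∫⁻ θ in Ioo (-π) π, ψ (circleMap c ρ θ) :=
      setLIntegral_mono' measurableSet_Ioo fun ρ hρ => mul_le_mul_right (hcircle ρ hρ) _
    _ = ∫⁻ z in ball c r, ψ z := (setLIntegral_ball_eq_lintegral_circleMap c r hψ).symm
    _ = ∫⁻ z in ball c r, ENNReal.ofReal (‖F z‖ ^ 2) := by
      rw [setLIntegral_indicator measurableSet_closedBall,
        inter_eq_right.2 ball_subset_closedBall]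

theorem ofReal_sq_norm_mul_volume_univ_pi_ball_le {n : ℕ} {F : (Fin n → ℂ) → ℂ}
    {a : Fin n → ℂ} {r : Fin n → ℝ} (hr : ∀ i, 0 ≤ r i)
    (hF : DifferentiableOn ℂ F (univ.pi fun i => closedBall (a i) (r i))) :
    ENNReal.ofReal (‖F a‖ ^ 2) * volume (univ.pi fun i => ball (a i) (r i))
      ≤ ∫⁻ z in univ.pi fun i => ball (a i) (r i), ENNReal.ofReal (‖F z‖ ^ 2) := by
  induction n with
  | zero =>
    rw [← setLIntegral_const]
    exact (lintegral_congr fun z => by rw [Subsingleton.elim z a]).le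
  | succ n ih =>
    set φ := fun z => ENNReal.ofReal (‖F z‖ ^ 2)
    set K := univ.pi fun i => closedBall (a i) (r i)
    set B := univ.pi fun i : Fin n => ball (a i.succ) (r i.succ)
    have hK : MeasurableSet K := (isClosed_set_pi fun i _ => isClosed_closedBall).measurableSet
    have hψ : Measurable (K.indicator φ) :=
      hF.continuousOn.ennreal_ofReal_sq_norm.measurable_indicator hK
    have hsucc : ∀ i, 0 ≤ r (Fin.succ i) := fun i => hr i.succ
    have hcons {x y} (hx : x ∈ closedBall (a 0) (r 0))
        (hy : y ∈ univ.pi fun i : Fin n => closedBall (a i.succ) (r i.succ)) :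
        Fin.cons x y ∈ K :=
      Fin.cons_mem_univ_pi.2 ⟨hx, hy⟩
    have hBK {x y} (hx : x ∈ ball (a 0) (r 0)) (hy : y ∈ B) : Fin.cons x y ∈ K :=
      hcons (ball_subset_closedBall hx) (pi_mono (fun _ _ => ball_subset_closedBall) hy)
    calc φ a * volume (univ.pi fun i => ball (a i) (r i))
        = volume B * (φ (Fin.cons (a 0) (Fin.tail a)) * volume (ball (a 0) (r 0))) := by
          rw [Fin.cons_self_tail, volume_pi_pi, volume_pi_pi, Fin.prod_univ_succ]
          ring
      _ ≤ volume B * ∫⁻ x in ball (a 0) (r 0), φ (Fin.cons x (Fin.tail a)) := by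
          refine mul_le_mul_right ?_ _
          have hslice : DifferentiableOn ℂ (fun x => F (Fin.cons x (Fin.tail a)))
              (closedBall (a 0) (r 0)) :=
            hF.comp (by fun_prop) fun x hx => hcons hx fun i _ => mem_closedBall_self (hsucc i)
          exact ofReal_sq_norm_mul_volume_ball_le (c := a 0) hslice
      _ ≤ ∫⁻ x in ball (a 0) (r 0), volume B * φ (Fin.cons x (Fin.tail a)) :=
          lintegral_const_mul_le _ _
      _ ≤ ∫⁻ x in ball (a 0) (r 0), ∫⁻ y in B, φ (Fin.cons x y) := by
          refine setLIntegral_mono' measurableSet_ball fun x hx => ?_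
          rw [mul_comm]
          exact ih hsucc (hF.comp (by fun_prop) fun y hy => hcons (ball_subset_closedBall hx) hy)
      _ = ∫⁻ x in ball (a 0) (r 0), ∫⁻ y in B, K.indicator φ (Fin.cons x y) :=
          setLIntegral_congr_fun measurableSet_ball fun x hx =>
            setLIntegral_congr_fun (MeasurableSet.univ_pi fun _ => measurableSet_ball)
              fun y hy => (indicator_of_mem (hBK hx hy) φ).symm
      _ = ∫⁻ z in univ.pi fun i => ball (a i) (r i), K.indicator φ z :=
          (setLIntegral_univ_pi_fin_succ (fun i => ball (a i) (r i)) hψ).symm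
      _ = ∫⁻ z in univ.pi fun i => ball (a i) (r i), φ z := by
          rw [setLIntegral_indicator hK,
            inter_eq_right.2 (pi_mono fun _ _ => ball_subset_closedBall)]

theorem ofReal_sq_norm_mul_volume_le_setLIntegral_image {n : ℕ} {M : Set (Fin n → ℂ)}
    {T : (Fin n → ℂ) → (Fin n → ℂ)} {f : (Fin n → ℂ) → ℂ} (hT : DifferentiableOn ℂ T M)
    (hTM : MapsTo T M M) (hTinj : InjOn T M)
    (hTvol : ∀ s ⊆ M, MeasurableSet s → volume (T '' s) = volume s)
    (hf : DifferentiableOn ℂ f M) {a : Fin n → ℂ} {r : ℝ} (hr : 0 ≤ r)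
    (hK : (univ.pi fun i => closedBall (a i) r) ⊆ M) :
    ENNReal.ofReal (‖f (T a)‖ ^ 2) * volume (univ.pi fun i => ball (a i) r)
      ≤ ∫⁻ w in T '' univ.pi (fun i => ball (a i) r), ENNReal.ofReal (‖f w‖ ^ 2) := by
  have hP : MeasurableSet (univ.pi fun i => ball (a i) r) :=
    MeasurableSet.univ_pi fun _ => measurableSet_ball
  have hPM : (univ.pi fun i => ball (a i) r) ⊆ M :=
    (pi_mono fun _ _ => ball_subset_closedBall).trans hK
  refine (ofReal_sq_norm_mul_volume_univ_pi_ball_le (fun _ => hr)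
    ((hf.comp hT hTM).mono hK)).trans_eq ?_
  refine setLIntegral_comp_eq_setLIntegral_image (φ := fun w => ENNReal.ofReal (‖f w‖ ^ 2)) hP
    (hT.continuousOn.mono hPM) (fun s hs => hTvol s (hs.trans hPM)) ?_
  exact (hf.continuousOn.mono (hTM.mono_left hPM).image_subset).ennreal_ofReal_sq_norm.aemeasurable
    (hP.image_of_continuousOn_injOn (hT.continuousOn.mono hPM) (hTinj.mono hPM))

theorem poincare_series_summable_general
    (n : ℕ) (M : Set (Fin n → ℂ)) (hM : IsOpen M)
    (G : Type) [Group G] (act : G → (Fin n → ℂ) → (Fin n → ℂ))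
    -- `act` realizes `G` as a group of maps of `M`:
    (h_one : ∀ x ∈ M, act 1 x = x)
    (h_mul : ∀ g h : G, ∀ x ∈ M, act (g * h) x = act g (act h x))
    -- each element is a biholomorphic map of `M` preserving Lebesgue measure:
    (h_bij : ∀ g : G, Set.BijOn (act g) M M)
    (h_holo : ∀ g : G, DifferentiableOn ℂ (act g) M)
    (h_meas : ∀ g : G, ∀ s : Set (Fin n → ℂ), s ⊆ M → MeasurableSet s →
      volume (act g '' s) = volume s)
    -- a point with finite stabilizer and a suitable neighborhood:
    (a : Fin n → ℂ)
    (h_stab : {g : G | act g a = a}.Finite)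
    (U : Set (Fin n → ℂ)) (hU : IsOpen U) (haU : a ∈ U) (hUM : U ⊆ M)
    (hU1 : ∀ g : G, (act g '' U ∩ U).Nonempty → act g a = a)
    -- a square-integrable holomorphic function on `M`:
    (f : (Fin n → ℂ) → ℂ) (hf : DifferentiableOn ℂ f M)
    (hf2 : (∫⁻ z in M, ENNReal.ofReal (‖f z‖ ^ 2) ∂volume) < ⊤) :
    Summable (fun g : G => ‖f (act g a)‖ ^ 2) := by
  obtain ⟨r, hr, hKU⟩ := exists_pos_univ_pi_closedBall_subset hU haU
  set P := univ.pi fun i => ball (a i) r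
  have hPU : P ⊆ U := (pi_mono fun _ _ => ball_subset_closedBall).trans hKU
  have hPM : P ⊆ M := hPU.trans hUM
  have hvolP : volume P ≠ 0 :=
    (isOpen_set_pi finite_univ fun _ _ => isOpen_ball).measure_ne_zero volume
      ⟨a, fun _ _ => mem_ball_self hr⟩
  have hoverlap (g h : G) (hgh : (act g '' P ∩ act h '' P).Nonempty) :
      h⁻¹ * g ∈ {g : G | act g a = a} := by
    obtain ⟨_, ⟨p, hp, rfl⟩, q, hq, hqp⟩ := hgh
    refine hU1 _ ⟨q, ⟨p, hPU hp, ?_⟩, hPU hq⟩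
    rw [h_mul _ _ _ (hPM hp), ← hqp, ← h_mul _ _ _ (hPM hq), inv_mul_cancel, h_one _ (hPM hq)]
  have hgP (g : G) : MeasurableSet (act g '' P) :=
    (MeasurableSet.univ_pi fun _ => measurableSet_ball).image_of_continuousOn_injOn
      ((h_holo g).continuousOn.mono hPM) ((h_bij g).injOn.mono hPM)
  have hgPM (g : G) : act g '' P ⊆ M := ((h_bij g).mapsTo.mono_left hPM).image_subset
  have hbound (t : Finset G) : (∑ g ∈ t, ENNReal.ofReal (‖f (act g a)‖ ^ 2)) * volume P
      ≤ {g : G | act g a = a}.ncard * ∫⁻ z in M, ENNReal.ofReal (‖f z‖ ^ 2) := by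
    rw [Finset.sum_mul]
    calc _ ≤ ∑ g ∈ t, ∫⁻ w in act g '' P, ENNReal.ofReal (‖f w‖ ^ 2) :=
          Finset.sum_le_sum fun g _ => ofReal_sq_norm_mul_volume_le_setLIntegral_image (h_holo g)
            (h_bij g).mapsTo (h_bij g).injOn (h_meas g) hf hr.le (hKU.trans hUM)
      _ ≤ _ := sum_setLIntegral_le_mul_setLIntegral
          (hf.continuousOn.ennreal_ofReal_sq_norm.aemeasurable hM.measurableSet) hgP hgPM
          (card_filter_mem_le_ncard h_stab hoverlap t)
  exact summable_of_sum_ofReal_mul_le (fun _ => by positivity) hvolP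
    (ENNReal.mul_ne_top (by simp) hf2.ne) hbound

/-- **Convergence criterion for Poincaré series.** Let `M ⊆ ℂⁿ` be open and
let `Γ` (here: a group `G` acting faithfully on `M` via `act`) be a group of
measure-preserving biholomorphic maps of `M`.  Let `a ∈ M` have finite
stabilizer `Γ_a`, and suppose there is an open neighborhood `U ⊆ M` of `a`
such that `A(U) ∩ U ≠ ∅ → A ∈ Γ_a` and `A ∈ Γ_a → A(U) = U`.  Then for every
holomorphic `f : M → ℂ` with `∫_M |f|² < ∞`, the family `(|f(A a)|²)_{A ∈ Γ}`
is (unconditionally) summable. -/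
theorem poincare_series_summable
    (n : ℕ) (M : Set (Fin n → ℂ)) (hM : IsOpen M)
    (G : Type) [Group G] (act : G → (Fin n → ℂ) → (Fin n → ℂ))
    -- `act` realizes `G` as a group of maps of `M`:
    (h_one : ∀ x ∈ M, act 1 x = x)
    (h_mul : ∀ g h : G, ∀ x ∈ M, act (g * h) x = act g (act h x))
    (h_faithful : ∀ g h : G, (∀ x ∈ M, act g x = act h x) → g = h)
    -- each element is a biholomorphic map of `M` preserving Lebesgue measure:
    (h_bij : ∀ g : G, Set.BijOn (act g) M M)
    (h_holo : ∀ g : G, DifferentiableOn ℂ (act g) M)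
    (h_meas : ∀ g : G, ∀ s : Set (Fin n → ℂ), s ⊆ M → MeasurableSet s →
      volume (act g '' s) = volume s)
    -- a point with finite stabilizer and a suitable neighborhood:
    (a : Fin n → ℂ) (ha : a ∈ M)
    (h_stab : {g : G | act g a = a}.Finite)
    (U : Set (Fin n → ℂ)) (hU : IsOpen U) (haU : a ∈ U) (hUM : U ⊆ M)
    (hU1 : ∀ g : G, (act g '' U ∩ U).Nonempty → act g a = a)
    (hU2 : ∀ g : G, act g a = a → act g '' U = U)
    -- a square-integrable holomorphic function on `M`:
    (f : (Fin n → ℂ) → ℂ) (hf : DifferentiableOn ℂ f M)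
    (hf2 : (∫⁻ z in M, ENNReal.ofReal (‖f z‖ ^ 2) ∂volume) < ⊤) :
    Summable (fun g : G => ‖f (act g a)‖ ^ 2) :=
  poincare_series_summable_general n M hM G act h_one h_mul h_bij h_holo h_meas a h_stab U hU haU
    hUM hU1 f hf hf2
end
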